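/- arXiv:1810.05103 — 4 statements merged into one kernel-verified Lean document; each statement's English description precedes it below -/
import Mathlib

section
/- Let C1 and C2 be linear codes of length n over F_q with dimensions k1, k2, such that dim(C1 ∩ C2) = ℓ and C1 + C2 = F_q^n. Then for any generator matrix G1 of C1 and parity-check matrix H2 of C2, rank(G1 · H2^t) = n − k2 = k1 − ℓ. -/
/-!
The columns of `H₂ᵀ` span `C₂^⊥`, and `G₁` acts on `F^n` with kernel `C₁^⊥`. Since
`C₁^⊥ ∩ C₂^⊥ = (C₁ + C₂)^⊥ = 0`, multiplication by `G₁` is injective on `C₂^⊥`, so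
`rank (G₁ H₂ᵀ) = dim C₂^⊥ = n - k₂`. The dimension formula for `C₁ + C₂ = F^n` gives
`k₁ + k₂ = n + ℓ`.
-/

open Matrix

variable {F : Type*} [Field F] [Fintype F]

/-- The Euclidean dual of a linear code `C ⊆ F^n`. -/
def dualCode {n : ℕ} (C : Submodule F (Fin n → F)) : Submodule F (Fin n → F) where
  carrier := {u | ∀ c ∈ C, dotProduct u c = 0}
  add_mem' := by
    intro a b ha hb c hc
    simp [add_dotProduct, ha c hc, hb c hc]
  zero_mem' := by
    intro c hc
    simp
  smul_mem' := by
    intro r a ha c hc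
    simp [smul_dotProduct, ha c hc]

/-- `G` is a generator matrix of the code `C`: its rows form a basis of `C`. -/
def IsGenMat {n k : ℕ} (C : Submodule F (Fin n → F)) (G : Matrix (Fin k) (Fin n) F) : Prop :=
  LinearIndependent F (fun i => G i) ∧ Submodule.span F (Set.range fun i => G i) = C

theorem Matrix.rank_mul_eq_right_of_disjoint {K m n o : Type*} [Field K] [Fintype n] [Fintype o]
    {A : Matrix m n K} {B : Matrix n o K}
    (h : Disjoint (LinearMap.ker A.mulVecLin) (LinearMap.range B.mulVecLin)) :
    (A * B).rank = B.rank := by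
  have hinj : LinearMap.ker (A.mulVecLin.domRestrict (LinearMap.range B.mulVecLin)) = ⊥ := by
    rwa [LinearMap.ker_domRestrict, ← Submodule.disjoint_iff_comap_eq_bot, disjoint_comm]
  rw [Matrix.rank, Matrix.rank, Matrix.mulVecLin_mul, LinearMap.range_comp,
    ← LinearMap.range_domRestrict, LinearMap.finrank_range_of_inj (LinearMap.ker_eq_bot.mp hinj)]

section DualCode

variable {K : Type*} [Field K] {n : ℕ}

theorem dualCode_eq_comap_dualAnnihilator (C : Submodule K (Fin n → K)) :
    dualCode C = C.dualAnnihilator.comap (dotProductEquiv K (Fin n)).toLinearMap := by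
  ext u
  rw [Submodule.mem_comap, Submodule.mem_dualAnnihilator]
  rfl

theorem finrank_dualCode (C : Submodule K (Fin n → K)) :
    Module.finrank K (dualCode C) = n - Module.finrank K C := by
  have h := Subspace.finrank_add_finrank_dualAnnihilator_eq C
  rw [Module.finrank_fin_fun] at h
  rw [dualCode_eq_comap_dualAnnihilator, Submodule.comap_equiv_eq_map_symm,
    LinearEquiv.finrank_map_eq]
  omega

theorem dualCode_sup (C₁ C₂ : Submodule K (Fin n → K)) :
    dualCode (C₁ ⊔ C₂) = dualCode C₁ ⊓ dualCode C₂ := by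
  simp only [dualCode_eq_comap_dualAnnihilator, Submodule.dualAnnihilator_sup_eq,
    Submodule.comap_inf]

theorem dualCode_top : dualCode (⊤ : Submodule K (Fin n → K)) = ⊥ := by
  rw [dualCode_eq_comap_dualAnnihilator, Submodule.dualAnnihilator_top, Submodule.comap_bot,
    LinearEquiv.ker]

theorem mem_dualCode_span_iff {s : Set (Fin n → K)} {u : Fin n → K} :
    u ∈ dualCode (Submodule.span K s) ↔ ∀ x ∈ s, u ⬝ᵥ x = 0 :=
  Submodule.span_le (p := LinearMap.ker (dotProductEquiv K (Fin n) u))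

end DualCode

namespace IsGenMat

variable {K : Type*} [Field K] {n k : ℕ} {C : Submodule K (Fin n → K)} {G : Matrix (Fin k) (Fin n) K}

theorem range_mulVecLin_transpose (hG : IsGenMat C G) : LinearMap.range Gᵀ.mulVecLin = C := by
  rw [Matrix.range_mulVecLin, Matrix.col_transpose]
  exact hG.2

theorem dualCode_eq_ker_mulVecLin (hG : IsGenMat C G) :
    dualCode C = LinearMap.ker G.mulVecLin := by
  ext u
  rw [← hG.2, mem_dualCode_span_iff, LinearMap.mem_ker, Set.forall_mem_range, funext_iff]
  simp [Matrix.mulVec, dotProduct_comm]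

end IsGenMat

theorem rank_of_intersection_pair_sum_full {n k1 k2 ℓ m2 : ℕ}
    (C1 C2 : Submodule F (Fin n → F))
    (hk1 : Module.finrank F C1 = k1) (hk2 : Module.finrank F C2 = k2)
    (hl : Module.finrank F ↥(C1 ⊓ C2) = ℓ) (hsum : C1 ⊔ C2 = ⊤)
    (G1 : Matrix (Fin k1) (Fin n) F) (hG1 : IsGenMat C1 G1)
    (H2 : Matrix (Fin m2) (Fin n) F) (hH2 : IsGenMat (dualCode C2) H2) :
    (G1 * H2.transpose).rank = n - k2 ∧ n - k2 = k1 - ℓ := by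
  have hdisj : Disjoint (LinearMap.ker G1.mulVecLin) (LinearMap.range H2ᵀ.mulVecLin) := by
    rw [← hG1.dualCode_eq_ker_mulVecLin, hH2.range_mulVecLin_transpose, disjoint_iff,
      ← dualCode_sup, hsum, dualCode_top]
  have hdim := Submodule.finrank_sup_add_finrank_inf_eq C1 C2
  rw [hsum, finrank_top, Module.finrank_fin_fun, hk1, hk2, hl] at hdim
  refine ⟨?_, by omega⟩
  rw [Matrix.rank_mul_eq_right_of_disjoint hdisj, Matrix.rank, hH2.range_mulVecLin_transpose,
    finrank_dualCode, hk2]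
end

section
/- Let C1 and C2 be linear codes of length n over F_q forming a linear complementary pair (i.e., C1 ∩ C2 = {0} and C1 + C2 = F_q^n), with dimensions k1 and k2. Then for any generator matrix G1 of C1 and parity-check matrix H2 of C2, the matrix G1 · H2^t has rank k1 (equivalently, since k1 = n − k2, G1 · H2^t is an invertible square matrix). -/
/-!
A vector `g` with `g ᵥ* (G1 * H2ᵀ) = 0` gives the codeword `v = g ᵥ* G1` of `C1`, and
`H2 *ᵥ v = 0` says that `v` is orthogonal to the dual of `C2`, so `v` lies in the double dual,
which is `C2` again. Hence `v ∈ C1 ⊓ C2 = ⊥`, and `g = 0` because the rows of `G1` are linearly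
independent. So the `k1` rows of `G1 * H2ᵀ` are linearly independent.
-/

open Matrix

variable {F : Type*} [Field F] [Fintype F]

section

omit [Fintype F]

variable {n : ℕ}

theorem dualCode_eq_orthogonal (C : Submodule F (Fin n → F)) :
    dualCode C = LinearMap.BilinForm.orthogonal (dotProductBilin F F) C := by
  ext u
  simp only [LinearMap.BilinForm.mem_orthogonal_iff, dotProductBilin_apply_apply, dotProduct_comm]
  rfl

theorem dotProductBilin_isRefl :
    LinearMap.BilinForm.IsRefl (dotProductBilin F F : LinearMap.BilinForm F (Fin n → F)) :=
  fun u v h => by rwa [dotProductBilin_apply_apply, dotProduct_comm] at h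

theorem dotProductBilin_nondegenerate :
    LinearMap.BilinForm.Nondegenerate (dotProductBilin F F : LinearMap.BilinForm F (Fin n → F)) := by
  refine ⟨fun u hu => dotProduct_eq_zero u hu, fun v hv => dotProduct_eq_zero v fun w => ?_⟩
  rw [dotProduct_comm]
  exact hv w

theorem dualCode_dualCode (C : Submodule F (Fin n → F)) : dualCode (dualCode C) = C := by
  rw [dualCode_eq_orthogonal, dualCode_eq_orthogonal,
    LinearMap.BilinForm.orthogonal_orthogonal dotProductBilin_nondegenerate dotProductBilin_isRefl]

variable {k : ℕ} {C : Submodule F (Fin n → F)} {G : Matrix (Fin k) (Fin n) F}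

theorem IsGenMat.vecMul_mem (hG : IsGenMat C G) (g : Fin k → F) : g ᵥ* G ∈ C := by
  rw [vecMul_eq_sum, ← hG.2]
  exact Submodule.sum_mem _ fun i _ => Submodule.smul_mem _ _ (Submodule.subset_span ⟨i, rfl⟩)

theorem IsGenMat.vecMul_injective (hG : IsGenMat C G) : Function.Injective G.vecMul :=
  vecMul_injective_iff.mpr hG.1

theorem IsGenMat.mulVec_eq_zero_iff (hG : IsGenMat C G) {u : Fin n → F} :
    G *ᵥ u = 0 ↔ u ∈ dualCode C := by
  change _ ↔ C ≤ LinearMap.ker (dotProductBilin F F u)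
  rw [← hG.2, Submodule.span_le, Set.range_subset_iff, funext_iff]
  simp [mulVec, dotProduct_comm]

theorem linearIndependent_row_mul_transpose_of_inf_eq_bot {k1 m2 : ℕ}
    {C1 C2 : Submodule F (Fin n → F)} {G1 : Matrix (Fin k1) (Fin n) F}
    {H2 : Matrix (Fin m2) (Fin n) F} (hinter : C1 ⊓ C2 = ⊥) (hG1 : IsGenMat C1 G1)
    (hH2 : IsGenMat (dualCode C2) H2) : LinearIndependent F (G1 * H2ᵀ).row := by
  rw [← vecMul_injective_iff, ← coe_vecMulLinear, ← LinearMap.ker_eq_bot, LinearMap.ker_eq_bot']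
  intro g hg
  have hv : g ᵥ* G1 ∈ C1 ⊓ C2 := by
    refine Submodule.mem_inf.mpr ⟨hG1.vecMul_mem g, ?_⟩
    rw [← dualCode_dualCode C2, ← hH2.mulVec_eq_zero_iff, ← vecMul_transpose, vecMul_vecMul]
    exact hg
  rw [hinter, Submodule.mem_bot] at hv
  exact hG1.vecMul_injective (hv.trans (zero_vecMul G1).symm)

end

theorem rank_of_LCP_general {n k1 m2 : ℕ}
    (C1 C2 : Submodule F (Fin n → F))
    (hinter : C1 ⊓ C2 = ⊥)
    (G1 : Matrix (Fin k1) (Fin n) F) (hG1 : IsGenMat C1 G1)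
    (H2 : Matrix (Fin m2) (Fin n) F) (hH2 : IsGenMat (dualCode C2) H2) :
    (G1 * H2.transpose).rank = k1 := by
  rw [(linearIndependent_row_mul_transpose_of_inf_eq_bot hinter hG1 hH2).rank_matrix,
    Fintype.card_fin]

theorem rank_of_LCP {n k1 k2 m2 : ℕ}
    (C1 C2 : Submodule F (Fin n → F))
    (hk1 : Module.finrank F C1 = k1) (hk2 : Module.finrank F C2 = k2)
    (hinter : C1 ⊓ C2 = ⊥) (hsum : C1 ⊔ C2 = ⊤)
    (G1 : Matrix (Fin k1) (Fin n) F) (hG1 : IsGenMat C1 G1)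
    (H2 : Matrix (Fin m2) (Fin n) F) (hH2 : IsGenMat (dualCode C2) H2) :
    (G1 * H2.transpose).rank = k1 :=
  rank_of_LCP_general C1 C2 hinter G1 hG1 H2 hH2
end

section
/- Let n ≤ q, a_1,…,a_n distinct in F_q, v_1,…,v_n nonzero in F_q. Let P, Q ∈ F_q[x] with M = lcm(P,Q), gcd(P·Q, Π_{i=1}^n (x − a_i)) = 1, and deg M ≤ n. Then GRS(a, P, v) + GRS(a, Q, v) = GRS(a, M, v). -/
/-!
Write `M = P * P' = Q * Q'`; as `M` is the lcm, the cofactors `P'` and `Q'` are coprime. Since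
`P * Q` has no zero among the `a i`, neither has any divisor of `M`, so the `GRS(a, P, v)`-word
of `f` is the `GRS(a, M, v)`-word of `f * P'`, and likewise for `Q`. The theorem thus reduces to
a statement about polynomials: those of degree `< deg M` are exactly the `f * P' + g * Q'` with
`deg f < deg P` and `deg g < deg Q`. Given `e`, take a Bézout relation `u * P' + w * Q' = 1`
and let `f` be `e * u` reduced modulo `P`; the degree bound on `g` then follows from that on
`e - f * P'`.
-/

open Polynomial

variable {F : Type*} [Field F] [Fintype F] [DecidableEq F]

/-- The generalized Reed--Solomon code with evaluation points `a`, column multipliers `v`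
and polynomial `P`. -/
def GRSCode {n : ℕ} (a v : Fin n → F) (P : Polynomial F) : Set (Fin n → F) :=
  {c | ∃ f : Polynomial F, f.degree < P.degree ∧
    c = fun i => v i * f.eval (a i) * (P.eval (a i))⁻¹}

theorem isRelPrime_of_lcm_eq_mul {α : Type*} [CommMonoidWithZero α] [GCDMonoid α]
    {a b a' b' : α} (h0 : lcm a b ≠ 0) (ha : lcm a b = a * a') (hb : lcm a b = b * b') :
    IsRelPrime a' b' := by
  rintro d ⟨s, rfl⟩ ⟨t, rfl⟩
  have hd : d ≠ 0 := by rintro rfl; simp_all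
  have hst : a * s = b * t := mul_right_cancel₀ hd <| by
    calc a * s * d = lcm a b := by rw [ha]; ac_rfl
      _ = b * t * d := by rw [hb]; ac_rfl
  obtain ⟨k, hk⟩ : lcm a b ∣ a * s := lcm_dvd (dvd_mul_right a s) (hst ▸ dvd_mul_right b t)
  refine .of_mul_eq_one k (mul_left_cancel₀ h0 ?_)
  calc lcm a b * (d * k) = lcm a b * k * d := by ac_rfl
    _ = lcm a b * 1 := by rw [← hk, ha, mul_one]; ac_rfl

theorem exists_lcm_eq_mul_mul_isCoprime {R : Type*} [CommRing R] [IsDomain R] [IsBezout R]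
    [GCDMonoid R] (a b : R) :
    ∃ a' b', lcm a b = a * a' ∧ lcm a b = b * b' ∧ IsCoprime a' b' := by
  rcases eq_or_ne (lcm a b) 0 with h0 | h0
  · rcases (lcm_eq_zero_iff a b).1 h0 with rfl | rfl
    · exact ⟨1, 0, by simp, by simp, isCoprime_one_left⟩
    · exact ⟨0, 1, by simp, by simp, isCoprime_one_right⟩
  · obtain ⟨a', ha⟩ := dvd_lcm_left a b
    obtain ⟨b', hb⟩ := dvd_lcm_right a b
    exact ⟨a', b', ha, hb, (isRelPrime_of_lcm_eq_mul h0 ha hb).isCoprime⟩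

theorem eval_ne_zero_of_isCoprime {R : Type*} [CommRing R] [Nontrivial R] {p q : R[X]} {x : R}
    (h : IsCoprime p q) (hq : q.eval x = 0) : p.eval x ≠ 0 := by
  have := h.map (evalRingHom x)
  rw [coe_evalRingHom, hq, isCoprime_zero_right] at this
  exact this.ne_zero

section
variable {K : Type*} [Field K]

theorem degree_mul_lt_degree_mul {f p q : K[X]} (hq : q ≠ 0) (h : f.degree < p.degree) :
    (f * q).degree < (p * q).degree := by
  rw [degree_mul, degree_mul]
  exact WithBot.add_lt_add_right (degree_ne_bot.mpr hq) h

theorem degree_lt_iff_exists_mul_add_mul {M P Q P' Q' : K[X]} (hP : M = P * P')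
    (hQ : M = Q * Q') (hcop : IsCoprime P' Q') {e : K[X]} :
    e.degree < M.degree ↔
      ∃ f g, f.degree < P.degree ∧ g.degree < Q.degree ∧ f * P' + g * Q' = e := by
  constructor
  · intro he
    have hM : M ≠ 0 := ne_zero_of_degree_gt he
    have hP0 : P ≠ 0 := left_ne_zero_of_mul (hP ▸ hM)
    have hP'0 : P' ≠ 0 := right_ne_zero_of_mul (hP ▸ hM)
    obtain ⟨u, w, huw⟩ := hcop
    set f := e * u % P
    set g := e * u / P * Q + e * w
    have hfg : f * P' + g * Q' = e := by
      have := EuclideanDomain.div_add_mod (e * u) P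
      linear_combination P' * this + e * huw + (e * u / P) * (hQ.symm.trans hP)
    have hf : f.degree < P.degree := EuclideanDomain.mod_lt _ hP0
    have hgQ' : (g * Q').degree < (Q * Q').degree := by
      rw [← hQ, eq_sub_of_add_eq' hfg]
      exact (degree_sub_le _ _).trans_lt (max_lt he (hP ▸ degree_mul_lt_degree_mul hP'0 hf))
    refine ⟨f, g, hf, ?_, hfg⟩
    rw [degree_mul, degree_mul] at hgQ'
    exact lt_of_add_lt_add_right hgQ'
  · rintro ⟨f, g, hf, hg, rfl⟩
    have hM : M ≠ 0 := by
      rintro rfl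
      have hP' : P' = 0 := (mul_eq_zero.1 hP.symm).resolve_left (ne_zero_of_degree_gt hf)
      have hQ' : Q' = 0 := (mul_eq_zero.1 hQ.symm).resolve_left (ne_zero_of_degree_gt hg)
      exact not_isCoprime_zero_zero (hP' ▸ hQ' ▸ hcop)
    refine (degree_add_le _ _).trans_lt (max_lt ?_ ?_)
    · exact hP ▸ degree_mul_lt_degree_mul (right_ne_zero_of_mul (hP ▸ hM)) hf
    · exact hQ ▸ degree_mul_lt_degree_mul (right_ne_zero_of_mul (hQ ▸ hM)) hg

variable {n : ℕ} (a v : Fin n → K)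

def grsWord (P f : K[X]) : Fin n → K := fun i => v i * f.eval (a i) * (P.eval (a i))⁻¹

theorem grsWord_add (P f g : K[X]) :
    grsWord a v P (f + g) = grsWord a v P f + grsWord a v P g := by
  funext i
  simp only [grsWord, eval_add, Pi.add_apply]
  ring

theorem grsWord_mul_mul_right {Q : K[X]} (hQ : ∀ i, Q.eval (a i) ≠ 0) (P f : K[X]) :
    grsWord a v (P * Q) (f * Q) = grsWord a v P f := by
  funext i
  simp only [grsWord, eval_mul, mul_inv]
  field_simp [hQ i]

theorem GRSCode_eq_setOf_grsWord (P : K[X]) :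
    GRSCode a v P = {c | ∃ f, f.degree < P.degree ∧ c = grsWord a v P f} :=
  rfl

theorem GRSCode_eq_setOf_grsWord_mul {M P P' : K[X]} (hP : M = P * P')
    (hP' : ∀ i, P'.eval (a i) ≠ 0) :
    GRSCode a v P = {c | ∃ f, f.degree < P.degree ∧ c = grsWord a v M (f * P')} := by
  simp only [GRSCode_eq_setOf_grsWord, hP, grsWord_mul_mul_right a v hP']

theorem GRSCode_add_eq {M P Q P' Q' : K[X]} (hP : M = P * P') (hQ : M = Q * Q')
    (hcop : IsCoprime P' Q') (hP' : ∀ i, P'.eval (a i) ≠ 0) (hQ' : ∀ i, Q'.eval (a i) ≠ 0) :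
    {x | ∃ c ∈ GRSCode a v P, ∃ d ∈ GRSCode a v Q, x = c + d} = GRSCode a v M := by
  rw [GRSCode_eq_setOf_grsWord_mul a v hP hP', GRSCode_eq_setOf_grsWord_mul a v hQ hQ',
    GRSCode_eq_setOf_grsWord]
  ext x
  constructor
  · rintro ⟨_, ⟨f, hf, rfl⟩, _, ⟨g, hg, rfl⟩, rfl⟩
    refine ⟨f * P' + g * Q', ?_, (grsWord_add a v M _ _).symm⟩
    exact (degree_lt_iff_exists_mul_add_mul hP hQ hcop).2 ⟨f, g, hf, hg, rfl⟩
  · rintro ⟨e, he, rfl⟩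
    obtain ⟨f, g, hf, hg, rfl⟩ := (degree_lt_iff_exists_mul_add_mul hP hQ hcop).1 he
    exact ⟨_, ⟨f, hf, rfl⟩, _, ⟨g, hg, rfl⟩, grsWord_add a v M _ _⟩

end

theorem GRSCode_sum_general {n : ℕ}
    (a v : Fin n → F)
    (P Q M : Polynomial F)
    (hlcm : lcm P Q = M)
    (hcop : IsCoprime (P * Q) (∏ i, (X - C (a i)))) :
    {x | ∃ c ∈ GRSCode a v P, ∃ d ∈ GRSCode a v Q, x = c + d} = GRSCode a v M := by
  subst hlcm
  obtain ⟨P', Q', hP, hQ, hcop'⟩ := exists_lcm_eq_mul_mul_isCoprime P Q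
  have hPQ (i : Fin n) : (P * Q).eval (a i) ≠ 0 :=
    eval_ne_zero_of_isCoprime hcop <| by
      rw [eval_prod]; exact Finset.prod_eq_zero (Finset.mem_univ i) (by simp)
  have hlcm_dvd : lcm P Q ∣ P * Q := lcm_dvd (dvd_mul_right P Q) (dvd_mul_left Q P)
  have hdvd {R : F[X]} (hR : R ∣ lcm P Q) (i : Fin n) : R.eval (a i) ≠ 0 :=
    ne_zero_of_dvd_ne_zero (hPQ i) (eval_dvd (hR.trans hlcm_dvd))
  exact GRSCode_add_eq a v hP hQ hcop' (hdvd (hP ▸ dvd_mul_left P' P))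
    (hdvd (hQ ▸ dvd_mul_left Q' Q))

theorem GRSCode_sum {n : ℕ} (hn : n ≤ Fintype.card F)
    (a v : Fin n → F) (ha : Function.Injective a) (hv : ∀ i, v i ≠ 0)
    (P Q M : Polynomial F)
    (hlcm : lcm P Q = M)
    (hcop : IsCoprime (P * Q) (∏ i, (X - C (a i))))
    (hMdeg : M.natDegree ≤ n) :
    {x | ∃ c ∈ GRSCode a v P, ∃ d ∈ GRSCode a v Q, x = c + d} = GRSCode a v M :=
  GRSCode_sum_general a v P Q M hlcm hcop
end

section
/- Let A be an n×n super-regular matrix over F_q (every square submatrix of A is nonsingular). For all integers i, j, ℓ with 0 ≤ i ≤ n, 0 ≤ j ≤ n − i, and 0 ≤ ℓ ≤ i, there exist MDS codes C of parameters [n, i, n−i+1]_q and D of parameters [n, j+ℓ, n−j−ℓ+1]_q with dim(C ∩ D) = ℓ. -/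
variable {F : Type*} [Field F] [Fintype F] [DecidableEq F]

/-- A matrix is super-regular if every square submatrix of it is nonsingular. -/
def SuperRegular {k m : ℕ} (A : Matrix (Fin k) (Fin m) F) : Prop :=
  ∀ (s : ℕ) (r : Fin s → Fin k) (c : Fin s → Fin m),
    Function.Injective r → Function.Injective c → (A.submatrix r c).det ≠ 0

/-- `C` is an MDS code of length `n` and dimension `k`. -/
def IsMDSCode {n : ℕ} (k : ℕ) (C : Submodule F (Fin n → F)) : Prop :=
  Module.finrank F C = k ∧ ∀ c ∈ C, c ≠ 0 → n - k + 1 ≤ hammingNorm c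

section Aux

variable {F' : Type*} [Field F'] [DecidableEq F']

/-- The coordinate subspace of vectors supported on `S`. -/
def coordSub {n : ℕ} (S : Finset (Fin n)) : Submodule F' (Fin n → F') where
  carrier := {g | ∀ t ∉ S, g t = 0}
  add_mem' := fun ha hb t ht => by
    simp only [Pi.add_apply, ha t ht, hb t ht, add_zero]
  zero_mem' := fun t _ => rfl
  smul_mem' := fun c g hg t ht => by
    simp only [Pi.smul_apply, hg t ht, smul_zero]

lemma mem_coordSub {n : ℕ} {S : Finset (Fin n)} {g : Fin n → F'} :
    g ∈ (coordSub S : Submodule F' (Fin n → F')) ↔ ∀ t ∉ S, g t = 0 := Iff.rfl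

lemma finrank_coordSub {n : ℕ} (S : Finset (Fin n)) :
    Module.finrank F' (coordSub (F' := F') S) = S.card := by
  let e : coordSub (F' := F') S ≃ₗ[F'] (S → F') :=
    { toFun := fun g s => g.1 s
      map_add' := fun a b => rfl
      map_smul' := fun c a => rfl
      invFun := fun v => ⟨fun t => if h : t ∈ S then v ⟨t, h⟩ else 0,
        fun t ht => dif_neg ht⟩
      left_inv := fun g => Subtype.ext (funext fun t => by
        by_cases h : t ∈ S
        · simp [h]
        · simp [h, g.2 t h])
      right_inv := fun v => funext fun s => by simp }
  rw [e.finrank_eq, Module.finrank_fintype_fun_eq_card, Fintype.card_coe]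

lemma coordSub_inf {n : ℕ} (S T : Finset (Fin n)) :
    (coordSub S ⊓ coordSub T : Submodule F' (Fin n → F')) = coordSub (S ∩ T) := by
  ext g
  constructor
  · rintro ⟨h1, h2⟩ t ht
    by_cases hS : t ∈ S
    · exact h2 t (fun hT => ht (Finset.mem_inter.2 ⟨hS, hT⟩))
    · exact h1 t hS
  · intro h
    exact ⟨fun t ht => h t (fun h' => ht (Finset.mem_inter.1 h').1),
           fun t ht => h t (fun h' => ht (Finset.mem_inter.1 h').2)⟩

lemma mem_image_castLE {n m : ℕ} (h : m ≤ n) (t : Fin n) :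
    t ∈ Finset.univ.image (Fin.castLE h) ↔ (t : ℕ) < m := by
  simp only [Finset.mem_image, Finset.mem_univ, true_and]
  exact ⟨by rintro ⟨s, rfl⟩; exact s.isLt, fun hlt => ⟨⟨t, hlt⟩, Fin.ext rfl⟩⟩

/-- The index map selecting the first `ℓ` rows and rows `i, …, i+j-1`. -/
def rowSel (n i j ℓ : ℕ) (hij : i + j ≤ n) (hℓ : ℓ ≤ i) : Fin (j + ℓ) → Fin n :=
  fun t => ⟨if (t : ℕ) < ℓ then (t : ℕ) else i - ℓ + (t : ℕ), by have := t.isLt; split <;> omega⟩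

lemma rowSel_val {n i j ℓ : ℕ} (hij : i + j ≤ n) (hℓ : ℓ ≤ i) (t : Fin (j + ℓ)) :
    (rowSel n i j ℓ hij hℓ t : ℕ) = if (t : ℕ) < ℓ then (t : ℕ) else i - ℓ + (t : ℕ) := rfl

lemma rowSel_injective {n i j ℓ : ℕ} (hij : i + j ≤ n) (hℓ : ℓ ≤ i) :
    Function.Injective (rowSel n i j ℓ hij hℓ) := by
  intro a b hab
  have h := congrArg Fin.val hab
  rw [rowSel_val, rowSel_val] at h
  apply Fin.ext
  split_ifs at h <;> omega

lemma mem_image_rowSel {n i j ℓ : ℕ} (hij : i + j ≤ n) (hℓ : ℓ ≤ i) (t : Fin n) :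
    t ∈ Finset.univ.image (rowSel n i j ℓ hij hℓ) ↔
      ((t : ℕ) < ℓ ∨ (i ≤ (t : ℕ) ∧ (t : ℕ) < i + j)) := by
  simp only [Finset.mem_image, Finset.mem_univ, true_and]
  constructor
  · rintro ⟨s, rfl⟩
    rw [rowSel_val]
    have := s.isLt
    split <;> omega
  · rintro (h | h)
    · refine ⟨⟨t, by omega⟩, Fin.ext ?_⟩
      rw [rowSel_val]
      show (if ((t : ℕ)) < ℓ then ((t : ℕ)) else i - ℓ + ((t : ℕ))) = (t : ℕ)
      split <;> omega
    · refine ⟨⟨(t : ℕ) - i + ℓ, by omega⟩, Fin.ext ?_⟩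
      rw [rowSel_val]
      show (if ((t : ℕ) - i + ℓ) < ℓ then ((t : ℕ) - i + ℓ) else i - ℓ + ((t : ℕ) - i + ℓ)) = (t : ℕ)
      split <;> omega

/-- Key weight bound: a nonzero combination of `k` rows of a super-regular matrix
has Hamming weight at least `n - k + 1`. -/
lemma weight_bound {n k : ℕ} (A : Matrix (Fin n) (Fin n) F')
    (hA : SuperRegular A) (hk : k ≤ n)
    (r : Fin k → Fin n) (hr : Function.Injective r)
    (g : Fin n → F') (hg : ∀ t ∉ Finset.univ.image r, g t = 0)
    (c : Fin n → F') (hc : ∀ s, c s = ∑ t, A t s * g t) (hcne : c ≠ 0) :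
    n - k + 1 ≤ hammingNorm c := by
  by_contra hcon
  push_neg at hcon
  have hw : hammingNorm c ≤ n - k := by omega
  -- the zero set of `c` has at least `k` elements
  set Z : Finset (Fin n) := Finset.univ.filter (fun s => c s = 0) with hZ
  have hcard : k ≤ Z.card := by
    have h1 : Z.card + hammingNorm c = n := by
      have := Finset.card_filter_add_card_filter_not
        (s := (Finset.univ : Finset (Fin n))) (p := fun s => c s = 0)
      simp only [Finset.card_univ, Fintype.card_fin] at this
      have hnorm : hammingNorm c = (Finset.univ.filter (fun s => ¬ c s = 0)).card := by
        unfold hammingNorm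
        congr 1
      rw [hnorm]
      exact this
    omega
  obtain ⟨Z', hZ'sub, hZ'card⟩ := Finset.exists_subset_card_eq hcard
  let e := Z'.equivFin
  let cmap : Fin k → Fin n := fun u => (e.symm (Fin.cast hZ'card.symm u) : Fin n)
  have hcmap : Function.Injective cmap := by
    intro a b hab
    have : e.symm (Fin.cast hZ'card.symm a) = e.symm (Fin.cast hZ'card.symm b) :=
      Subtype.ext hab
    have := e.symm.injective this
    simpa [Fin.ext_iff] using this
  have hczero : ∀ u : Fin k, c (cmap u) = 0 := by
    intro u
    have hmem : cmap u ∈ Z' := (e.symm (Fin.cast hZ'card.symm u)).2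
    have := hZ'sub hmem
    rw [hZ, Finset.mem_filter] at this
    exact this.2
  -- the coefficient vector on the selected rows
  set g' : Fin k → F' := fun v => g (r v) with hg'
  set M : Matrix (Fin k) (Fin k) F' := A.submatrix r cmap with hM
  have hvm : Matrix.vecMul g' M = 0 := by
    funext u
    have hsum : ∑ t, A t (cmap u) * g t = ∑ v, A (r v) (cmap u) * g (r v) := by
      rw [← Finset.sum_image (f := fun t => A t (cmap u) * g t)
        (g := r) (fun x _ y _ h => hr h)]
      refine (Finset.sum_subset (Finset.subset_univ _) ?_).symm
      intro t _ ht
      rw [hg t ht, mul_zero]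
    have h0 : ∑ v, A (r v) (cmap u) * g (r v) = 0 := by
      rw [← hsum, ← hc, hczero u]
    calc Matrix.vecMul g' M u = ∑ v, g' v * M v u := by
          simp [Matrix.vecMul, dotProduct]
      _ = ∑ v, A (r v) (cmap u) * g (r v) := by
          simp [hg', hM, Matrix.submatrix_apply, mul_comm]
      _ = 0 := h0
  have hMdet : IsUnit M.det := isUnit_iff_ne_zero.2 (hA k r cmap hr hcmap)
  have hg'0 : g' = 0 := by
    have : Matrix.vecMul g' (M * M⁻¹) = Matrix.vecMul (0 : Fin k → F') M⁻¹ := by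
      rw [← Matrix.vecMul_vecMul, hvm]
    rw [Matrix.mul_nonsing_inv M hMdet, Matrix.vecMul_one, Matrix.zero_vecMul] at this
    exact this
  have hgz : g = 0 := by
    funext t
    by_cases ht : t ∈ Finset.univ.image r
    · obtain ⟨v, _, rfl⟩ := Finset.mem_image.1 ht
      have := congrFun hg'0 v
      simpa [hg'] using this
    · exact hg t ht
  apply hcne
  funext s
  rw [hc s, hgz]
  simp

end Aux

theorem superRegular_gives_MDS_intersection_pairs {n : ℕ}
    (A : Matrix (Fin n) (Fin n) F) (hA : SuperRegular A)
    (i j ℓ : ℕ) (hi : i ≤ n) (hj : j ≤ n - i) (hℓ : ℓ ≤ i) :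
    ∃ C D : Submodule F (Fin n → F),
      IsMDSCode i C ∧ IsMDSCode (j + ℓ) D ∧ Module.finrank F ↥(C ⊓ D) = ℓ := by
  have hij : i + j ≤ n := by omega
  have hjℓ : j + ℓ ≤ n := by omega
  have hℓn : ℓ ≤ n := le_trans hℓ hi
  -- A is invertible
  have hdet : IsUnit (Matrix.det A.transpose) := by
    rw [Matrix.det_transpose]
    refine isUnit_iff_ne_zero.2 ?_
    have := hA n id id Function.injective_id Function.injective_id
    simpa using this
  have hinv : Invertible A.transpose := Matrix.invertibleOfIsUnitDet A.transpose hdet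
  let φ : (Fin n → F) ≃ₗ[F] (Fin n → F) := Matrix.toLinearEquiv' A.transpose hinv
  have hφ : ∀ g : Fin n → F, ∀ s, φ g s = ∑ t, A t s * g t := by
    intro g s
    show Matrix.toLin' A.transpose g s = _
    rw [Matrix.toLin'_apply]
    simp [Matrix.mulVec, dotProduct, Matrix.transpose_apply, mul_comm]
  -- index maps
  let r₁ : Fin i → Fin n := Fin.castLE hi
  have hr₁ : Function.Injective r₁ := Fin.castLE_injective hi
  let r₂ : Fin (j + ℓ) → Fin n := rowSel n i j ℓ hij hℓ
  have hr₂ : Function.Injective r₂ := rowSel_injective hij hℓ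
  set S₁ : Finset (Fin n) := Finset.univ.image r₁ with hS₁
  set S₂ : Finset (Fin n) := Finset.univ.image r₂ with hS₂
  set S₀ : Finset (Fin n) := Finset.univ.image (Fin.castLE hℓn) with hS₀
  have hcard₁ : S₁.card = i := by
    rw [hS₁, Finset.card_image_of_injective _ hr₁, Finset.card_univ, Fintype.card_fin]
  have hcard₂ : S₂.card = j + ℓ := by
    rw [hS₂, Finset.card_image_of_injective _ hr₂, Finset.card_univ, Fintype.card_fin]
  have hcard₀ : S₀.card = ℓ := by
    rw [hS₀, Finset.card_image_of_injective _ (Fin.castLE_injective hℓn),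
      Finset.card_univ, Fintype.card_fin]
  have hSinter : S₁ ∩ S₂ = S₀ := by
    ext t
    rw [Finset.mem_inter, hS₁, hS₂, hS₀, mem_image_castLE, mem_image_castLE,
      mem_image_rowSel]
    omega
  refine ⟨(coordSub S₁).map (φ : (Fin n → F) →ₗ[F] (Fin n → F)),
          (coordSub S₂).map (φ : (Fin n → F) →ₗ[F] (Fin n → F)), ?_, ?_, ?_⟩
  · constructor
    · rw [LinearEquiv.finrank_map_eq, finrank_coordSub, hcard₁]
    · rintro c ⟨g, hg, rfl⟩ hcne
      exact weight_bound A hA hi r₁ hr₁ g hg _ (hφ g) hcne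
  · constructor
    · rw [LinearEquiv.finrank_map_eq, finrank_coordSub, hcard₂]
    · rintro c ⟨g, hg, rfl⟩ hcne
      exact weight_bound A hA hjℓ r₂ hr₂ g hg _ (hφ g) hcne
  · rw [← Submodule.map_inf (φ : (Fin n → F) →ₗ[F] (Fin n → F)) φ.injective, coordSub_inf, hSinter,
      LinearEquiv.finrank_map_eq, finrank_coordSub, hcard₀]
end
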